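/- arXiv:1802.01973 — 3 statements merged into one kernel-verified Lean document; each statement's English description precedes it below -/
import Mathlib

section
/- Let W ∈ L(H) be a positive operator, S ⊆ H a closed subspace, and T the shorted operator of W to S. Then the orthogonal complement of the image W(ker T) equals the orthogonal complement of the image W(S), i.e. (W(ker T))^⊥ = (W(S))^⊥ as subspaces of H. -/
open ContinuousLinearMap
open scoped ComplexInnerProductSpace

noncomputable section

variable {H : Type*} [NormedAddCommGroup H] [InnerProductSpace ℂ H] [CompleteSpace H]

/-- `M(W,S)`: the set of operators `X` with `0 ≤ X ≤ W` (Loewner order) and `range X ⊆ S^⊥`. -/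
def MSet (W : H →L[ℂ] H) (S : Submodule ℂ H) : Set (H →L[ℂ] H) :=
  {X | X.IsPositive ∧ (W - X).IsPositive ∧ LinearMap.range ((X : H →L[ℂ] H) : H →ₗ[ℂ] H) ≤ Sᗮ}

/-- `T` is the shorted operator of `W` to `S`, i.e. the maximum of `M(W,S)` in the Loewner
order. -/
def IsShorted (W : H →L[ℂ] H) (S : Submodule ℂ H) (T : H →L[ℂ] H) : Prop :=
  T ∈ MSet W S ∧ ∀ X ∈ MSet W S, (T - X).IsPositive

/-- The minus order: `A ⁻≤ B` iff there are bounded idempotents `P, Q` with `A = PB` and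
`A* = QB*`. -/
def MinusLE (A B : H →L[ℂ] H) : Prop :=
  ∃ P Q : H →L[ℂ] H, IsIdempotentElem P ∧ IsIdempotentElem Q ∧
    A = P ∘L B ∧ adjoint A = Q ∘L adjoint B

/-- The pair `(W, N)` is compatible: there is a bounded idempotent `Q` with range `N` such that
`WQ` is selfadjoint. -/
def Compatible (W : H →L[ℂ] H) (N : Submodule ℂ H) : Prop :=
  ∃ Q : H →L[ℂ] H, IsIdempotentElem Q ∧ LinearMap.range ((Q : H →L[ℂ] H) : H →ₗ[ℂ] H) = N ∧ IsSelfAdjoint (W ∘L Q)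

/-- `M⁻(W,S)`: operators `X` with `X ⁻≤ W`, `range X ⊆ S^⊥` and `range X* ⊆ S^⊥`. -/
def MMinusSet (W : H →L[ℂ] H) (S : Submodule ℂ H) : Set (H →L[ℂ] H) :=
  {X | MinusLE X W ∧ LinearMap.range ((X : H →L[ℂ] H) : H →ₗ[ℂ] H) ≤ Sᗮ ∧ LinearMap.range ((adjoint X : H →L[ℂ] H) : H →ₗ[ℂ] H) ≤ Sᗮ}

/-- `X₀` is a `W`-inverse of `M` in `R(C)`: for every `x`, `X₀ x` is a `W`-weighted least squares
solution of `M z = C x`. -/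
def WInverseIn (W M C X₀ : H →L[ℂ] H) : Prop :=
  ∀ x z : H, (⟪W (M (X₀ x) - C x), M (X₀ x) - C x⟫).re ≤ (⟪W (M z - C x), M z - C x⟫).re

/-- The left weighted star order `A ₋*_W≤ B`. -/
def LStarW (W A B : H →L[ℂ] H) : Prop :=
  LinearMap.range ((B : H →L[ℂ] H) : H →ₗ[ℂ] H) = LinearMap.range ((A : H →L[ℂ] H) : H →ₗ[ℂ] H) ⊔ LinearMap.range ((B - A : H →L[ℂ] H) : H →ₗ[ℂ] H) ∧
  LinearMap.range ((A : H →L[ℂ] H) : H →ₗ[ℂ] H) ⊓ LinearMap.range ((B - A : H →L[ℂ] H) : H →ₗ[ℂ] H) = ⊥ ∧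
  LinearMap.range ((B - A : H →L[ℂ] H) : H →ₗ[ℂ] H) ≤ LinearMap.ker ((adjoint A ∘L W : H →L[ℂ] H) : H →ₗ[ℂ] H)

/-- The right weighted star order `A ≤*_W B`. -/
def RStarW (W A B : H →L[ℂ] H) : Prop :=
  LinearMap.range ((adjoint B : H →L[ℂ] H) : H →ₗ[ℂ] H) =
    LinearMap.range ((adjoint A : H →L[ℂ] H) : H →ₗ[ℂ] H) ⊔ LinearMap.range ((adjoint B - adjoint A : H →L[ℂ] H) : H →ₗ[ℂ] H) ∧
  LinearMap.range ((adjoint A : H →L[ℂ] H) : H →ₗ[ℂ] H) ⊓ LinearMap.range ((adjoint B - adjoint A : H →L[ℂ] H) : H →ₗ[ℂ] H) = ⊥ ∧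
  LinearMap.range ((adjoint B - adjoint A : H →L[ℂ] H) : H →ₗ[ℂ] H) ≤ LinearMap.ker ((A ∘L W : H →L[ℂ] H) : H →ₗ[ℂ] H)

/-- The weighted star order `A *_W≤ B`. -/
def StarW (W A B : H →L[ℂ] H) : Prop :=
  LStarW W A B ∧ RStarW W A B

/-! Write `W = A†A`. Then `y ⊥ W N` iff `A y ⊥ A N`, so it suffices that `A (ker T)` and `A S` have
the same closure. Since `T` is selfadjoint with range in `Sᗮ`, `S ⊆ ker T`. Conversely, with `P` the
projection onto `(A S)ᗮ`, the operator `A† P A` lies in `M(W,S)`, hence below `T`; on `ker T` this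
forces `‖P A x‖² ≤ ⟪T x, x⟫ = 0`, i.e. `A x ∈ (A S)ᗮᗮ`. -/

open Submodule
open scoped InnerProduct

section Adjoint

variable {𝕜 E F : Type*} [RCLike 𝕜] [NormedAddCommGroup E] [InnerProductSpace 𝕜 E]
  [NormedAddCommGroup F] [InnerProductSpace 𝕜 F] [CompleteSpace E] [CompleteSpace F]

theorem IsSelfAdjoint.le_ker_of_range_le_orthogonal {T : E →L[𝕜] E} (hT : IsSelfAdjoint T)
    {S : Submodule 𝕜 E} (h : LinearMap.range (T : E →ₗ[𝕜] E) ≤ Sᗮ) :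
    S ≤ LinearMap.ker (T : E →ₗ[𝕜] E) := by
  have hker : LinearMap.ker (T : E →ₗ[𝕜] E) = (LinearMap.range (T : E →ₗ[𝕜] E))ᗮ := by
    rw [ContinuousLinearMap.orthogonal_range, hT.adjoint_eq]
  rw [hker]
  exact (le_orthogonal_orthogonal S).trans (orthogonal_le h)

theorem orthogonal_map_adjoint_comp_self (A : E →L[𝕜] F) (N : Submodule 𝕜 E) :
    (N.map ((A† ∘L A : E →L[𝕜] E) : E →ₗ[𝕜] E))ᗮ = (N.map (A : E →ₗ[𝕜] F))ᗮ.comap (A : E →ₗ[𝕜] F) := by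
  ext y
  simp only [mem_orthogonal, mem_comap, mem_map, forall_exists_index, and_imp,
    forall_apply_eq_imp_iff₂, ContinuousLinearMap.coe_coe, ContinuousLinearMap.comp_apply,
    ContinuousLinearMap.adjoint_inner_left]

end Adjoint

section Shorted

variable {F : Type*} [NormedAddCommGroup F] [InnerProductSpace ℂ F] [CompleteSpace F]

theorem adjoint_comp_starProjection_comp_mem_MSet (A : H →L[ℂ] F) (S : Submodule ℂ H) :
    A† ∘L (S.map (A : H →ₗ[ℂ] F))ᗮ.starProjection ∘L A ∈ MSet (A† ∘L A) S := by
  set P := (S.map (A : H →ₗ[ℂ] F))ᗮ.starProjection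
  have hP : IsStarProjection P := isStarProjection_starProjection
  have hcompl : A† ∘L A - A† ∘L P ∘L A = A† ∘L (1 - P) ∘L A := by
    rw [sub_comp, comp_sub, one_def, id_comp]
  refine ⟨(nonneg_iff_isPositive P |>.1 hP.nonneg).adjoint_conj A, ?_, ?_⟩
  · rw [hcompl]
    exact (nonneg_iff_isPositive _ |>.1 hP.one_sub_nonneg).adjoint_conj A
  · rintro _ ⟨z, rfl⟩
    rw [mem_orthogonal]
    intro s hs
    rw [coe_coe, comp_apply, adjoint_inner_right]
    exact inner_right_of_mem_orthogonal (mem_map_of_mem hs) (starProjection_apply_mem _ _)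

theorem IsShorted.map_ker_le {A : H →L[ℂ] F} {S : Submodule ℂ H} {T : H →L[ℂ] H}
    (hT : IsShorted (A† ∘L A) S T) :
    (LinearMap.ker (T : H →ₗ[ℂ] H)).map (A : H →ₗ[ℂ] F) ≤ (S.map (A : H →ₗ[ℂ] F))ᗮᗮ := by
  set U := (S.map (A : H →ₗ[ℂ] F))ᗮ
  rintro _ ⟨x, hx, rfl⟩
  have hTx : T x = 0 := hx
  have hle := (hT.2 _ (adjoint_comp_starProjection_comp_mem_MSet A S)).re_inner_nonneg_left x
  rw [sub_apply, inner_sub_left, map_sub, hTx, inner_zero_left, map_zero,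
    comp_apply, comp_apply, adjoint_inner_left, U.re_inner_starProjection_eq_normSq] at hle
  have hproj : U.orthogonalProjectionOnto (A x) = 0 :=
    norm_eq_zero.1 (pow_eq_zero_iff two_ne_zero |>.1 (le_antisymm (by linarith) (sq_nonneg _)))
  exact orthogonalProjectionOnto_eq_zero_iff.1 hproj

end Shorted

theorem stmt2_general (W T : H →L[ℂ] H) (S : Submodule ℂ H)
    (hW : W.IsPositive) (hT : IsShorted W S T) :
    ((LinearMap.ker ((T : H →L[ℂ] H) : H →ₗ[ℂ] H)).map ((W : H →L[ℂ] H) : H →ₗ[ℂ] H))ᗮ = (S.map ((W : H →L[ℂ] H) : H →ₗ[ℂ] H))ᗮ := by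
  obtain ⟨A, rfl⟩ : ∃ A : H →L[ℂ] H, W = A† ∘L A := by
    obtain ⟨A, hA⟩ := CStarAlgebra.nonneg_iff_eq_star_mul_self.1 ((nonneg_iff_isPositive W).2 hW)
    exact ⟨A, hA⟩
  rw [orthogonal_map_adjoint_comp_self, orthogonal_map_adjoint_comp_self]
  congr 1
  have hS : S ≤ LinearMap.ker (T : H →ₗ[ℂ] H) :=
    hT.1.1.isSelfAdjoint.le_ker_of_range_le_orthogonal hT.1.2.2
  exact le_antisymm (orthogonal_le (map_mono hS)) (IsOrtho.symm hT.map_ker_le)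

/-- `(W(ker T))^⊥ = (W(S))^⊥` for the shorted operator `T` of `W` to `S`. -/
theorem stmt2 (W T : H →L[ℂ] H) (S : Submodule ℂ H) (hS : IsClosed (S : Set H))
    (hW : W.IsPositive) (hT : IsShorted W S T) :
    ((LinearMap.ker ((T : H →L[ℂ] H) : H →ₗ[ℂ] H)).map ((W : H →L[ℂ] H) : H →ₗ[ℂ] H))ᗮ = (S.map ((W : H →L[ℂ] H) : H →ₗ[ℂ] H))ᗮ :=
  stmt2_general W T S hW hT
end
end

section
/- Let W ∈ L(H) be a positive operator and A, B ∈ L(H) such that ker W ∩ closure(range A) = {0} and the pair (W, closure(range A)) is compatible. Then A ₋*_W≤ B if and only if range A ⊆ range B and A*WA = A*WB. -/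
/-!
Both characterizations share the condition `range (B - A) ⊆ ker (A*W)`, which is just a
rewriting of `A*WA = A*WB`, and `range B = range A + range (B - A)` holds as soon as
`range A ⊆ range B`. What remains is the disjointness of `range A` and `range (B - A)`: for
`y = A u` in both, `⟪W y, y⟫ = ⟪A*W y, u⟫ = 0`, so positivity of `W` forces `W y = 0`, and
`y = 0` because `ker W` meets `range A` trivially.
-/

open ContinuousLinearMap
open scoped ComplexInnerProductSpace

noncomputable section

variable {H : Type*} [NormedAddCommGroup H] [InnerProductSpace ℂ H] [CompleteSpace H]

namespace LinearMap

variable {R E F G : Type*} [Ring R] [AddCommGroup E] [AddCommGroup F] [AddCommGroup G]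
  [Module R E] [Module R F] [Module R G]

theorem range_eq_range_sup_range_sub_iff (g h : E →ₗ[R] F) :
    range h = range g ⊔ range (h - g) ↔ range g ≤ range h := by
  refine ⟨fun heq => heq ▸ le_sup_left, fun hgh => le_antisymm ?_ (sup_le hgh ?_)⟩
  · rintro _ ⟨x, rfl⟩
    exact Submodule.mem_sup.2 ⟨g x, mem_range_self g x, (h - g) x, mem_range_self _ x, by simp⟩
  · rintro _ ⟨x, rfl⟩
    simpa using sub_mem (mem_range_self h x) (hgh (mem_range_self g x))

theorem range_sub_le_ker_iff_comp_eq (f : F →ₗ[R] G) (g h : E →ₗ[R] F) :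
    range (h - g) ≤ ker f ↔ f ∘ₗ g = f ∘ₗ h := by
  simp only [range_le_ker_iff, comp_sub, sub_eq_zero, eq_comm]

end LinearMap

namespace ContinuousLinearMap

variable {K : Type*} [NormedAddCommGroup K] [InnerProductSpace ℂ K] [CompleteSpace K]

theorem IsPositive.apply_eq_zero_of_inner_eq_zero {W : H →L[ℂ] H} (hW : W.IsPositive) {y : H}
    (hy : ⟪W y, y⟫ = 0) : W y = 0 := by
  obtain ⟨S, rfl⟩ := CStarAlgebra.nonneg_iff_eq_star_mul_self.1 ((nonneg_iff_isPositive W).2 hW)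
  rw [star_eq_adjoint] at hy ⊢
  have hSy : ‖S y‖ ^ 2 = 0 := by
    rw [apply_norm_sq_eq_inner_adjoint_left]
    simpa using congrArg Complex.re hy
  rw [mul_apply_eq_comp, norm_eq_zero.1 (pow_eq_zero_iff two_ne_zero |>.1 hSy), map_zero]

theorem range_inf_range_eq_bot_of_range_le_ker_adjoint_comp {W : H →L[ℂ] H} (hW : W.IsPositive)
    {A C : K →L[ℂ] H} (hA : LinearMap.ker (W : H →ₗ[ℂ] H) ⊓ LinearMap.range (A : K →ₗ[ℂ] H) = ⊥)
    (hC : LinearMap.range (C : K →ₗ[ℂ] H) ≤ LinearMap.ker ((adjoint A ∘L W : H →L[ℂ] K) : H →ₗ[ℂ] K)) :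
    LinearMap.range (A : K →ₗ[ℂ] H) ⊓ LinearMap.range (C : K →ₗ[ℂ] H) = ⊥ := by
  rw [Submodule.eq_bot_iff]
  rintro y ⟨⟨u, rfl⟩, hyC⟩
  have hAWy : adjoint A (W (A u)) = 0 := hC hyC
  have hWy : W (A u) = 0 := hW.apply_eq_zero_of_inner_eq_zero <| by
    rw [← adjoint_inner_left, hAWy, inner_zero_left]
  exact (Submodule.eq_bot_iff _).1 hA _ ⟨hWy, u, rfl⟩

end ContinuousLinearMap

theorem stmt14_general (W A B : H →L[ℂ] H) (hW : W.IsPositive)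
    (h1 : LinearMap.ker ((W : H →L[ℂ] H) : H →ₗ[ℂ] H) ⊓ (LinearMap.range ((A : H →L[ℂ] H) : H →ₗ[ℂ] H)).topologicalClosure = ⊥) :
    LStarW W A B ↔
      LinearMap.range ((A : H →L[ℂ] H) : H →ₗ[ℂ] H) ≤ LinearMap.range ((B : H →L[ℂ] H) : H →ₗ[ℂ] H) ∧
        adjoint A ∘L (W ∘L A) = adjoint A ∘L (W ∘L B) := by
  have hker_iff : LinearMap.range ((B - A : H →L[ℂ] H) : H →ₗ[ℂ] H) ≤
      LinearMap.ker ((adjoint A ∘L W : H →L[ℂ] H) : H →ₗ[ℂ] H) ↔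
      adjoint A ∘L (W ∘L A) = adjoint A ∘L (W ∘L B) := by
    rw [toLinearMap_sub, LinearMap.range_sub_le_ker_iff_comp_eq, ← toLinearMap_comp,
      ← toLinearMap_comp, coe_inj, comp_assoc, comp_assoc]
  have hA : LinearMap.ker (W : H →ₗ[ℂ] H) ⊓ LinearMap.range (A : H →ₗ[ℂ] H) = ⊥ :=
    eq_bot_mono (inf_le_inf_left _ (Submodule.le_topologicalClosure _)) h1
  rw [LStarW, toLinearMap_sub, LinearMap.range_eq_range_sup_range_sub_iff, ← toLinearMap_sub,
    hker_iff]
  refine ⟨fun ⟨hAB, _, heq⟩ => ⟨hAB, heq⟩, fun ⟨hAB, heq⟩ => ⟨hAB, ?_, heq⟩⟩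
  exact range_inf_range_eq_bot_of_range_le_ker_adjoint_comp hW hA (hker_iff.2 heq)

/-- if `ker W ∩ closure (range A) = {0}` and `(W, closure (range A))` is
compatible, then `A ₋*_W≤ B` iff `range A ⊆ range B` and `A*WA = A*WB`. -/
theorem stmt14 (W A B : H →L[ℂ] H) (hW : W.IsPositive)
    (h1 : LinearMap.ker ((W : H →L[ℂ] H) : H →ₗ[ℂ] H) ⊓ (LinearMap.range ((A : H →L[ℂ] H) : H →ₗ[ℂ] H)).topologicalClosure = ⊥)
    (h2 : Compatible W (LinearMap.range ((A : H →L[ℂ] H) : H →ₗ[ℂ] H)).topologicalClosure) :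
    LStarW W A B ↔
      LinearMap.range ((A : H →L[ℂ] H) : H →ₗ[ℂ] H) ≤ LinearMap.range ((B : H →L[ℂ] H) : H →ₗ[ℂ] H) ∧
        adjoint A ∘L (W ∘L A) = adjoint A ∘L (W ∘L B) :=
  stmt14_general W A B hW h1
end
end

section
/- Let W ∈ L(H) be a positive operator and A, B ∈ L(H) such that range(A + B) is closed, the pair (W, range(A + B)) is compatible, and A ₋*_W≤ A + B. Let T_{A+B}, T_A, T_B denote the shorted operators of W to the ranges of A + B, A and B respectively (i.e. the maxima in the Loewner order of the sets {X ∈ L(H) : 0 ≤ X ≤ W, range X ⊆ (range R)^⊥} for R = A+B, A, B). Then W − T_{A+B} = (W − T_A) + (W − T_B). -/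
open ContinuousLinearMap
open scoped ComplexInnerProductSpace

noncomputable section

variable {H : Type*} [NormedAddCommGroup H] [InnerProductSpace ℂ H] [CompleteSpace H]

/-!
Let `Q` be the compatible idempotent onto `N = R(A + B)`. The left `W`-star order makes
`N = R(A) ⊕ R(B)` with `R(B)` `W`-orthogonal to `R(A)`, so `Q = α + β` with `α`, `β` linear
(not necessarily bounded) into `R(A)`, `R(B)`, and the residuals `x - Q x`, `x - α x`, `x - β x`
are `W`-orthogonal to `N`, `R(A)`, `R(B)` respectively.

Whenever `x - P x` is `W`-orthogonal to `S` for a linear `P` into `S`, the shorted operator is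
`x ↦ W (x - P x)`: its quadratic form is the minimum of `⟪W (x - s), x - s⟫` over `s ∈ S`, which
bounds the form of every element of `M(W, S)`, and it is bounded by Hellinger–Toeplitz since it
is symmetric. Hence `W - T_{A+B} = W Q = W α + W β = (W - T_A) + (W - T_B)`.
-/

set_option linter.unusedSectionVars false

theorem Submodule.exists_add_eq_of_range_le_sup {R M N : Type*} [Ring R] [AddCommGroup M]
    [Module R M] [AddCommGroup N] [Module R N] {p q : Submodule R M} (hpq : Disjoint p q)
    (f : N →ₗ[R] M) (hf : LinearMap.range f ≤ p ⊔ q) :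
    ∃ g h : N →ₗ[R] M, (∀ x, g x ∈ p) ∧ (∀ x, h x ∈ q) ∧ g + h = f := by
  have hinj : Function.Injective (p.subtype.coprod q.subtype) := by
    rw [← LinearMap.ker_eq_bot, LinearMap.ker_coprod_of_disjoint_range] <;> simp [hpq]
  let e := LinearEquiv.ofInjective _ hinj
  let φ : N →ₗ[R] p × q := e.symm.toLinearMap ∘ₗ
    f.codRestrict _ (fun x => Submodule.sup_eq_range p q ▸ hf ⟨x, rfl⟩)
  refine ⟨p.subtype ∘ₗ LinearMap.fst R p q ∘ₗ φ, q.subtype ∘ₗ LinearMap.snd R p q ∘ₗ φ,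
    fun x => (φ x).1.2, fun x => (φ x).2.2, LinearMap.ext fun x => ?_⟩
  exact congrArg Subtype.val (e.apply_symm_apply ⟨f x, _⟩)

section WProjection

variable {𝕜 E : Type*} [RCLike 𝕜] [NormedAddCommGroup E] [InnerProductSpace 𝕜 E]

theorem ContinuousLinearMap.inner_sub_sub_eq_of_range_le_orthogonal {X : E →L[𝕜] E}
    (hX : (X : E →ₗ[𝕜] E).IsSymmetric) {S : Submodule 𝕜 E}
    (hXS : LinearMap.range (X : E →ₗ[𝕜] E) ≤ Sᗮ) (x : E) {s : E} (hs : s ∈ S) :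
    inner 𝕜 (X (x - s)) (x - s) = inner 𝕜 (X x) x := by
  have hperp : ∀ y, inner 𝕜 (X y) s = 0 := fun y =>
    Submodule.inner_left_of_mem_orthogonal hs (hXS (LinearMap.mem_range_self _ y))
  have hperp' : ∀ y, inner 𝕜 (X s) y = 0 := fun y => by
    rw [← coe_coe, hX, ← inner_conj_symm, coe_coe, hperp, map_zero]
  rw [map_sub, inner_sub_left, inner_sub_right, inner_sub_right, hperp, hperp', hperp',
    sub_zero, sub_zero, sub_zero]

/-- `P x` is a `W`-weighted least squares approximation of `x` from `S`. -/
structure IsWProjection (W : E →L[𝕜] E) (S : Submodule 𝕜 E) (P : E → E) : Prop where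
  mem : ∀ x, P x ∈ S
  inner_sub_eq_zero : ∀ x, ∀ s ∈ S, inner 𝕜 (W (x - P x)) s = 0

variable {W : E →L[𝕜] E} {S : Submodule 𝕜 E} {P : E → E}

theorem IsWProjection.inner_apply_sub {T : E → E} (hP : IsWProjection W S P)
    (hT : ∀ x, T x = W (x - P x)) (x y : E) : inner 𝕜 (T x) (y - P y) = inner 𝕜 (T x) y := by
  rw [inner_sub_right, hT, hP.inner_sub_eq_zero x _ (hP.mem y), sub_zero]

theorem IsWProjection.isSymmetric {T : E →ₗ[𝕜] E} (hW : W.IsSymmetric)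
    (hP : IsWProjection W S P) (hT : ∀ x, T x = W (x - P x)) : T.IsSymmetric := fun x y => by
  have hW' : ∀ a b, inner 𝕜 (W a) b = inner 𝕜 a (W b) := hW
  rw [← hP.inner_apply_sub hT, hT, hW', ← hT, ← inner_conj_symm, hP.inner_apply_sub hT,
    inner_conj_symm]

theorem IsWProjection.of_add {M₁ M₂ : Submodule 𝕜 E} {Q α β : E → E}
    (hQ : IsWProjection W (M₁ ⊔ M₂) Q) (hα : ∀ x, α x ∈ M₁) (hβ : ∀ x, β x ∈ M₂)
    (hαβ : ∀ x, α x + β x = Q x) (horth : ∀ b ∈ M₂, ∀ a ∈ M₁, inner 𝕜 (W b) a = 0) :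
    IsWProjection W M₁ α where
  mem := hα
  inner_sub_eq_zero x a ha := by
    have hres : x - α x = (x - Q x) + β x := by rw [← hαβ]; abel
    rw [hres, map_add, inner_add_left, hQ.inner_sub_eq_zero x a (Submodule.mem_sup_left ha),
      horth _ (hβ x) a ha, add_zero]

end WProjection

section Shorted

variable {W T : H →L[ℂ] H} {S : Submodule ℂ H}

theorem re_inner_le_of_mem_MSet {X : H →L[ℂ] H} (hX : X ∈ MSet W S) (x : H) {s : H}
    (hs : s ∈ S) : (⟪X x, x⟫).re ≤ (⟪W (x - s), x - s⟫).re := by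
  have h := hX.2.1.re_inner_nonneg_left (x - s)
  rw [sub_apply, inner_sub_left,
    inner_sub_sub_eq_of_range_le_orthogonal hX.1.isSymmetric hX.2.2 x hs] at h
  simp only [Complex.sub_re, RCLike.re_to_complex] at h
  linarith

theorem IsWProjection.isShorted {P : H → H} (hW : W.IsPositive) (hP : IsWProjection W S P)
    (hT : ∀ x, T x = W (x - P x)) : IsShorted W S T := by
  have hTsa : IsSelfAdjoint T := (hP.isSymmetric (T := T) hW.isSymmetric hT).isSelfAdjoint
  have hform : ∀ x, ⟪T x, x⟫ = ⟪W (x - P x), x - P x⟫ := fun x => by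
    rw [← hP.inner_apply_sub hT, hT]
  have hWT : ∀ x, ⟪(W - T) x, x⟫ = ⟪W (P x), P x⟫ := fun x => by
    have hres : ⟪W (P x), x - P x⟫ = 0 := by
      rw [hW.inner_left_eq_inner_right, ← inner_conj_symm, hP.inner_sub_eq_zero x _ (hP.mem x),
        map_zero]
    rw [sub_apply, hT, ← map_sub, sub_sub_cancel]
    calc ⟪W (P x), x⟫ = ⟪W (P x), x - P x⟫ + ⟪W (P x), P x⟫ := by
          rw [← inner_add_right, sub_add_cancel]
      _ = ⟪W (P x), P x⟫ := by rw [hres, zero_add]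
  refine ⟨⟨?_, ?_, ?_⟩, fun X hX => ?_⟩
  · refine (isPositive_def' (T := T)).mpr ⟨hTsa, fun x => ?_⟩
    rw [reApplyInnerSelf_apply, hform]
    exact hW.re_inner_nonneg_left _
  · refine isPositive_def'.mpr ⟨hW.isSelfAdjoint.sub hTsa, fun x => ?_⟩
    rw [reApplyInnerSelf_apply, hWT]
    exact hW.re_inner_nonneg_left _
  · rintro _ ⟨x, rfl⟩
    rw [Submodule.mem_orthogonal']
    intro s hs
    rw [coe_coe, hT, hP.inner_sub_eq_zero x s hs]
  · refine isPositive_def'.mpr ⟨hTsa.sub hX.1.isSelfAdjoint, fun x => ?_⟩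
    rw [reApplyInnerSelf_apply, sub_apply, inner_sub_left, map_sub, hform]
    have := re_inner_le_of_mem_MSet hX x (hP.mem x)
    simp only [RCLike.re_to_complex]
    linarith

theorem IsShorted.eq {T' : H →L[ℂ] H} (hT : IsShorted W S T) (hT' : IsShorted W S T') :
    T = T' :=
  le_antisymm (hT'.2 T hT.1) (hT.2 T' hT'.1)

theorem IsWProjection.exists_isShorted (hW : W.IsPositive) {P : H →ₗ[ℂ] H}
    (hP : IsWProjection W S P) : ∃ T, IsShorted W S T ∧ ∀ x, T x = W (x - P x) := by
  let L : H →ₗ[ℂ] H := (W : H →ₗ[ℂ] H) ∘ₗ (LinearMap.id - P)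
  have hL : ∀ x, L x = W (x - P x) := fun x => rfl
  let T : H →L[ℂ] H := ⟨L, (hP.isSymmetric hW.isSymmetric hL).continuous⟩
  exact ⟨T, hP.isShorted hW hL, hL⟩

theorem IsShorted.sub_apply_eq (hW : W.IsPositive) (hT : IsShorted W S T) {P : H →ₗ[ℂ] H}
    (hP : IsWProjection W S P) (x : H) : (W - T) x = W (P x) := by
  obtain ⟨T', hT', hT'P⟩ := hP.exists_isShorted hW
  rw [hT.eq hT', sub_apply, hT'P, map_sub, sub_sub_cancel]

end Shorted

theorem IsIdempotentElem.isWProjection {W Q : H →L[ℂ] H} (hW : (W : H →ₗ[ℂ] H).IsSymmetric)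
    (hQ : IsIdempotentElem Q) (hWQ : IsSelfAdjoint (W ∘L Q)) :
    IsWProjection W (LinearMap.range (Q : H →ₗ[ℂ] H)) Q where
  mem x := LinearMap.mem_range_self _ x
  inner_sub_eq_zero := by
    rintro x _ ⟨m, rfl⟩
    have hQQ : Q (Q x) = Q x := DFunLike.congr_fun hQ.eq x
    have hW' : ∀ a b, ⟪W a, b⟫ = ⟪a, W b⟫ := hW
    have hWQ' : ∀ a b, ⟪W (Q a), b⟫ = ⟪a, W (Q b)⟫ := hWQ.isSymmetric
    rw [coe_coe, hW', ← hWQ', map_sub, hQQ, sub_self, map_zero,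
      inner_zero_left]

theorem inner_apply_eq_zero_of_mem_ker_adjoint_comp {W A : H →L[ℂ] H} {a b : H}
    (hb : b ∈ LinearMap.ker ((adjoint A ∘L W : H →L[ℂ] H) : H →ₗ[ℂ] H))
    (ha : a ∈ LinearMap.range (A : H →ₗ[ℂ] H)) : ⟪W b, a⟫ = 0 := by
  obtain ⟨y, rfl⟩ := ha
  have hAWb : adjoint A (W b) = 0 := hb
  rw [coe_coe, ← adjoint_inner_left, hAWb, inner_zero_left]

theorem stmt17_general (W A B TAB TA TB : H →L[ℂ] H) (hW : W.IsPositive)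
    (hcomp : Compatible W (LinearMap.range ((A + B : H →L[ℂ] H) : H →ₗ[ℂ] H)))
    (hlw : LStarW W A (A + B))
    (hTAB : IsShorted W (LinearMap.range ((A + B : H →L[ℂ] H) : H →ₗ[ℂ] H)) TAB)
    (hTA : IsShorted W (LinearMap.range ((A : H →L[ℂ] H) : H →ₗ[ℂ] H)) TA)
    (hTB : IsShorted W (LinearMap.range ((B : H →L[ℂ] H) : H →ₗ[ℂ] H)) TB) :
    W - TAB = (W - TA) + (W - TB) := by
  obtain ⟨Q, hQ, hQN, hWQ⟩ := hcomp
  have hQ' : IsWProjection W (LinearMap.range ((A + B : H →L[ℂ] H) : H →ₗ[ℂ] H)) Q :=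
    hQN ▸ hQ.isWProjection hW.isSymmetric hWQ
  obtain ⟨hsup, hdisj, hker⟩ := hlw
  rw [add_sub_cancel_left] at hsup hdisj hker
  obtain ⟨α, β, hα, hβ, hαβ⟩ := Submodule.exists_add_eq_of_range_le_sup (disjoint_iff.mpr hdisj)
    (Q : H →ₗ[ℂ] H) (hQN.trans hsup).le
  replace hαβ : ∀ x, α x + β x = Q x := fun x => congr($hαβ x)
  have hBA : ∀ b ∈ LinearMap.range (B : H →ₗ[ℂ] H), ∀ a ∈ LinearMap.range (A : H →ₗ[ℂ] H),
      ⟪W b, a⟫ = 0 := fun b hb a ha => inner_apply_eq_zero_of_mem_ker_adjoint_comp (hker hb) ha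
  have hAB : ∀ a ∈ LinearMap.range (A : H →ₗ[ℂ] H), ∀ b ∈ LinearMap.range (B : H →ₗ[ℂ] H),
      ⟪W a, b⟫ = 0 := fun a ha b hb => by
    rw [hW.inner_left_eq_inner_right, ← inner_conj_symm, hBA b hb a ha, map_zero]
  have hA := (hsup ▸ hQ').of_add hα hβ hαβ hBA
  have hB := (sup_comm (LinearMap.range (A : H →ₗ[ℂ] H)) _ ▸ hsup ▸ hQ').of_add hβ hα
    (fun x => by rw [add_comm, hαβ]) hAB
  ext x
  rw [add_apply, hTA.sub_apply_eq hW hA, hTB.sub_apply_eq hW hB, ← map_add, hαβ,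
    hTAB.sub_apply_eq hW hQ']
  rfl

/-- if `range (A+B)` is closed, `(W, range (A+B))` is compatible and
`A ₋*_W≤ A + B`, then `W - T_{A+B} = (W - T_A) + (W - T_B)` for the shorted operators to
the ranges of `A + B`, `A`, `B`. -/
theorem stmt17 (W A B TAB TA TB : H →L[ℂ] H) (hW : W.IsPositive)
    (hAB : IsClosed (LinearMap.range ((A + B : H →L[ℂ] H) : H →ₗ[ℂ] H) : Set H))
    (hcomp : Compatible W (LinearMap.range ((A + B : H →L[ℂ] H) : H →ₗ[ℂ] H)))
    (hlw : LStarW W A (A + B))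
    (hTAB : IsShorted W (LinearMap.range ((A + B : H →L[ℂ] H) : H →ₗ[ℂ] H)) TAB)
    (hTA : IsShorted W (LinearMap.range ((A : H →L[ℂ] H) : H →ₗ[ℂ] H)) TA)
    (hTB : IsShorted W (LinearMap.range ((B : H →L[ℂ] H) : H →ₗ[ℂ] H)) TB) :
    W - TAB = (W - TA) + (W - TB) :=
  stmt17_general W A B TAB TA TB hW hcomp hlw hTAB hTA hTB
end
end
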